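/- arXiv:1303.7044 — 2 statements merged into one kernel-verified Lean document; each statement's English description precedes it below -/
import Mathlib

section
/- Let the sequence (p_j) of rationals be defined by p_2 = 7/11 and p_j = (2 + 3 p_{j-1})/(4 + 3 p_{j-1}) for j ≥ 3. Then p_j = (2·6^j − 2)/(3·6^j + 2) for all j ≥ 2. -/
theorem closedForm_recurrence_step {K : Type*} [Field K] [LinearOrder K] [IsStrictOrderedRing K]
    (x : K) (hx : 0 ≤ x) :
    (2 + 3 * ((2 * x - 2) / (3 * x + 2))) / (4 + 3 * ((2 * x - 2) / (3 * x + 2))) =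
      (2 * (6 * x) - 2) / (3 * (6 * x) + 2) := by
  have hx₀ : 3 * x + 2 ≠ 0 := by positivity
  have hnum : 2 + 3 * ((2 * x - 2) / (3 * x + 2)) = (12 * x - 2) / (3 * x + 2) := by
    field_simp; ring
  have hden : 4 + 3 * ((2 * x - 2) / (3 * x + 2)) = (18 * x + 2) / (3 * x + 2) := by
    field_simp; ring
  rw [hnum, hden, div_div_div_cancel_right₀ hx₀]
  ring

theorem stmt_0 (p : ℕ → ℚ) (h2 : p 2 = 7/11)
    (hrec : ∀ j, 3 ≤ j → p j = (2 + 3 * p (j-1)) / (4 + 3 * p (j-1))) :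
    ∀ j, 2 ≤ j → p j = (2 * 6^j - 2) / (3 * 6^j + 2) := by
  intro j hj
  induction j, hj using Nat.le_induction with
  | base => rw [h2]; norm_num
  | succ n hn ih =>
    rw [hrec (n + 1) (by omega), Nat.add_sub_cancel, ih, pow_succ']
    exact closedForm_recurrence_step _ (by positivity)
end

section
/- For every integer n ≥ 3, 2^{2n-3} · (11/4) · ∏_{j=2}^{n-2} (2 + (3/2)·p_j)^2 = (2/275)·(9·6^{n-2} + 1)^2, where p_j = (2·6^j − 2)/(3·6^j + 2). -/
theorem stmt_2 (n : ℕ) (hn : 3 ≤ n) :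
    (2:ℚ)^(2*n-3) * (11/4) *
      ∏ j ∈ Finset.Icc 2 (n-2), (2 + (3/2) * ((2 * 6^j - 2) / (3 * 6^j + 2)))^2
    = (2/275) * (9 * 6^(n-2) + 1)^2 := by
  obtain ⟨m, rfl⟩ := Nat.exists_eq_add_of_le hn
  induction m with
  | zero => norm_num
  | succ k ih =>
    have h1 : 3 + (k+1) - 2 = (3 + k - 2) + 1 := by omega
    have h2 : 2 * (3 + (k+1)) - 3 = (2 * (3 + k) - 3) + 2 := by omega
    have h3 : (2:ℕ) ≤ (3 + k - 2) + 1 := by omega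
    have h4 : 3 + k - 2 + 1 = k + 2 := by omega
    rw [h1, h2, Finset.prod_Icc_succ_top h3, pow_add, h4]
    have hd : (3:ℚ) * 6^(k+2) + 2 ≠ 0 := by positivity
    have key : (2:ℚ)^2 * (2 + (3/2) * ((2 * 6^(k+2) - 2) / (3 * 6^(k+2) + 2)))^2
        = ((9 * 6^(k+2) + 1) / (9 * 6^(k+1) + 1))^2 := by
      have h6 : (6:ℚ)^(k+2) = 6 * 6^(k+1) := by ring
      have hd2 : (9:ℚ) * 6^(k+1) + 1 ≠ 0 := by positivity
      field_simp
      ring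
    calc (2:ℚ)^(2*(3+k)-3) * 2^2 * (11/4) *
          ((∏ j ∈ Finset.Icc 2 (3+k-2), (2 + (3/2) * ((2 * 6^j - 2) / (3 * 6^j + 2)))^2)
            * (2 + (3/2) * ((2 * 6^(k+2) - 2) / (3 * 6^(k+2) + 2)))^2)
        = ((2:ℚ)^(2*(3+k)-3) * (11/4) *
            ∏ j ∈ Finset.Icc 2 (3+k-2), (2 + (3/2) * ((2 * 6^j - 2) / (3 * 6^j + 2)))^2)
          * (2^2 * (2 + (3/2) * ((2 * 6^(k+2) - 2) / (3 * 6^(k+2) + 2)))^2) := by ring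
      _ = (2/275) * (9 * 6^(3+k-2) + 1)^2 * ((9 * 6^(k+2) + 1) / (9 * 6^(k+1) + 1))^2 := by
          rw [ih (by omega), key]
      _ = (2/275) * (9 * 6^(k+2) + 1)^2 := by
          have h5 : 3 + k - 2 = k + 1 := by omega
          have hd2 : (9:ℚ) * 6^(k+1) + 1 ≠ 0 := by positivity
          rw [h5]
          field_simp
end
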